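/- Let F(x,y) = A x² + B x y + C y² be a positive definite real binary quadratic form that is reduced, i.e. C ≥ A ≥ |B| > 0 or C ≥ A ≥ |B| with A > 0. Then the minimum of F over the coset {(x,y) ∈ ℤ² : x odd, y even} equals A and is attained only at (±1, 0), and the minimum over {(x,y) : x even, y odd} equals C and is attained only at (0, ±1). -/

import Mathlib

/-- The real binary quadratic form `A x² + B x y + C y²` evaluated at integers. -/
def binQF (A B C : ℝ) (x y : ℤ) : ℝ :=
  A * (x : ℝ) ^ 2 + B * (x : ℝ) * (y : ℝ) + C * (y : ℝ) ^ 2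

/-! At a point `(u, v)` of either coset off the axes, `|v| ≥ 1` and `|u v| ≥ 2`, so with
`a = |u|`, `b = |v|` a reduced form is at least `A a² - A a b + C b² ≥ C + A ((a - b)² + a b - 1) > C`.
On the axes the form is `A x²` or `C y²` with `x`, resp. `y`, odd. -/

theorem Int.one_le_abs_of_odd {n : ℤ} (hn : Odd n) : 1 ≤ |n| :=
  Int.one_le_abs (by rintro rfl; simp at hn)

theorem le_mul_sq_of_odd {a : ℝ} (ha : 0 ≤ a) {n : ℤ} (hn : Odd n) : a ≤ a * (n : ℝ) ^ 2 := by
  have : (1 : ℝ) ≤ (n : ℝ) ^ 2 := by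
    exact_mod_cast one_le_sq_iff_one_le_abs _ |>.2 (Int.one_le_abs_of_odd hn)
  nlinarith

theorem eq_one_or_eq_neg_one_of_mul_sq_eq_self {a : ℝ} (ha : a ≠ 0) {n : ℤ}
    (h : a * (n : ℝ) ^ 2 = a) : n = 1 ∨ n = -1 := by
  have : (n : ℝ) ^ 2 = 1 := by simpa [ha] using h
  exact sq_eq_one_iff.mp (by exact_mod_cast this)

theorem Int.two_le_abs_mul_of_odd_of_even {x y : ℤ} (hx : Odd x) (hy : Even y) (hy0 : y ≠ 0) :
    2 ≤ |x * y| := by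
  rw [abs_mul]
  have hx1 : 1 ≤ |x| := Int.one_le_abs_of_odd hx
  have hy2 : 2 ≤ |y| := Int.le_of_dvd (abs_pos.2 hy0) ((dvd_abs _ _).2 hy.two_dvd)
  nlinarith

section Reduced

variable {A B C : ℝ}

theorem lt_reduced_form_of_two_le_abs_mul (hA : 0 < A) (hBA : |B| ≤ A) (hAC : A ≤ C)
    {u v : ℝ} (hv : 1 ≤ |v|) (huv : 2 ≤ |u * v|) :
    C < A * u ^ 2 + B * u * v + C * v ^ 2 := by
  have hcross : -(A * (|u| * |v|)) ≤ B * u * v := by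
    have : |B * u * v| ≤ A * (|u| * |v|) := by
      rw [abs_mul, abs_mul, mul_assoc]
      gcongr
    linarith [neg_abs_le (B * u * v)]
  rw [abs_mul] at huv
  rw [← sq_abs u, ← sq_abs v]
  have hv2 : (0 : ℝ) ≤ |v| ^ 2 - 1 := by nlinarith
  nlinarith [sq_nonneg (|u| - |v|), mul_nonneg (sub_nonneg.2 hAC) hv2]

theorem lt_binQF_of_two_le_abs_mul (hA : 0 < A) (hBA : |B| ≤ A) (hAC : A ≤ C)
    {x y : ℤ} (hy : 1 ≤ |y|) (hxy : 2 ≤ |x * y|) : C < binQF A B C x y :=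
  lt_reduced_form_of_two_le_abs_mul hA hBA hAC (by exact_mod_cast hy)
    (by exact_mod_cast hxy)

theorem binQF_zero_right (x : ℤ) : binQF A B C x 0 = A * (x : ℝ) ^ 2 := by
  simp [binQF]

theorem binQF_zero_left (y : ℤ) : binQF A B C 0 y = C * (y : ℝ) ^ 2 := by
  simp [binQF]

theorem binQF_odd_even (hA : 0 < A) (hBA : |B| ≤ A) (hAC : A ≤ C) :
    (∀ x y : ℤ, Odd x → Even y → A ≤ binQF A B C x y) ∧
      (∀ x y : ℤ, Odd x → Even y → binQF A B C x y = A → (x = 1 ∨ x = -1) ∧ y = 0) := by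
  have off_axis (x y : ℤ) (hx : Odd x) (hy : Even y) (hy0 : y ≠ 0) : A < binQF A B C x y :=
    hAC.trans_lt <| lt_binQF_of_two_le_abs_mul hA hBA hAC (Int.one_le_abs hy0)
      (Int.two_le_abs_mul_of_odd_of_even hx hy hy0)
  refine ⟨fun x y hx hy => ?_, fun x y hx hy h => ?_⟩ <;> rcases eq_or_ne y 0 with rfl | hy0
  · exact binQF_zero_right x ▸ le_mul_sq_of_odd hA.le hx
  · exact (off_axis x y hx hy hy0).le
  · rw [binQF_zero_right] at h
    exact ⟨eq_one_or_eq_neg_one_of_mul_sq_eq_self hA.ne' h, rfl⟩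
  · exact absurd h (off_axis x y hx hy hy0).ne'

theorem binQF_even_odd (hA : 0 < A) (hBA : |B| ≤ A) (hAC : A ≤ C) :
    (∀ x y : ℤ, Even x → Odd y → C ≤ binQF A B C x y) ∧
      (∀ x y : ℤ, Even x → Odd y → binQF A B C x y = C → x = 0 ∧ (y = 1 ∨ y = -1)) := by
  have hC : 0 < C := hA.trans_le hAC
  have off_axis (x y : ℤ) (hx : Even x) (hy : Odd y) (hx0 : x ≠ 0) : C < binQF A B C x y :=
    lt_binQF_of_two_le_abs_mul hA hBA hAC (Int.one_le_abs_of_odd hy)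
      (mul_comm x y ▸ Int.two_le_abs_mul_of_odd_of_even hy hx hx0)
  refine ⟨fun x y hx hy => ?_, fun x y hx hy h => ?_⟩ <;> rcases eq_or_ne x 0 with rfl | hx0
  · exact binQF_zero_left y ▸ le_mul_sq_of_odd hC.le hy
  · exact (off_axis x y hx hy hx0).le
  · rw [binQF_zero_left] at h
    exact ⟨rfl, eq_one_or_eq_neg_one_of_mul_sq_eq_self hC.ne' h⟩
  · exact absurd h (off_axis x y hx hy hx0).ne'

end Reduced

theorem stmt_4 (A B C : ℝ) (hA : 0 < A) (hBA : |B| ≤ A) (hAC : A ≤ C) :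
    ((∀ x y : ℤ, Odd x → Even y → A ≤ binQF A B C x y) ∧
      (∀ x y : ℤ, Odd x → Even y → binQF A B C x y = A → (x = 1 ∨ x = -1) ∧ y = 0)) ∧
    ((∀ x y : ℤ, Even x → Odd y → C ≤ binQF A B C x y) ∧
      (∀ x y : ℤ, Even x → Odd y → binQF A B C x y = C → x = 0 ∧ (y = 1 ∨ y = -1))) :=
  ⟨binQF_odd_even hA hBA hAC, binQF_even_odd hA hBA hAC⟩
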